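/- If B ⊆ Σⁿ is (1,1)-guaranteed and s ∈ Σⁿ is not in B, then for every position i ∈ {1,…,n} there exists v ∈ B differing from s by exactly one substitution at position i; in particular |N_n^1(s) ∩ B| ≥ n. -/

import Mathlib

/-!
Between words of equal length, edit distance at most `1` is the same as Hamming distance at
most `1`, because an insertion paired with a deletion already costs `2`. Given a position `i`,
let `t` be `s` with the letter at `i` replaced. A common neighbour `v ∈ B` of `s` and `t` is
not `s`, so it is `s` with exactly one letter substituted, and that letter must be at `i`, or
else `v` would be two substitutions away from `t`. The words obtained for different `i` are
different.
-/

/-- Cost structure for the Levenshtein distance (as formerly in Mathlib). -/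
structure Levenshtein.Cost (α β δ : Type*) where
  delete : α → δ
  insert : β → δ
  substitute : α → β → δ

/-- The default cost: every deletion, insertion and substitution costs `1`. -/
def Levenshtein.defaultCost {α : Type*} [DecidableEq α] : Levenshtein.Cost α α ℕ where
  delete _ := 1
  insert _ := 1
  substitute a b := if a = b then 0 else 1

/-- The Levenshtein distance, by its defining recursion (former Mathlib `levenshtein`). -/
def levenshtein {α β δ : Type*} [AddZeroClass δ] [Min δ] (C : Levenshtein.Cost α β δ) :
    List α → List β → δ
  | [], [] => 0
  | [], y :: ys => C.insert y + levenshtein C [] ys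
  | x :: xs, [] => C.delete x + levenshtein C xs []
  | x :: xs, y :: ys =>
      min (C.delete x + levenshtein C xs (y :: ys))
        (min (C.insert y + levenshtein C (x :: xs) ys)
          (C.substitute x y + levenshtein C xs ys))

/-- Edit (Levenshtein) distance between two length-`n` sequences over `α`. -/
def editDist {α : Type*} [DecidableEq α] {n : ℕ} (s t : Fin n → α) : ℕ :=
  levenshtein Levenshtein.defaultCost (List.ofFn s) (List.ofFn t)

/-- `B` is a `(d, r)`-guaranteed subset of `Σⁿ`: for every pair of sequences within
edit distance `d`, some sequence of `B` lies in both of their `r`-neighborhoods. -/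
def IsGuaranteed {α : Type*} [DecidableEq α] {n : ℕ} (d r : ℕ)
    (B : Set (Fin n → α)) : Prop :=
  ∀ s t : Fin n → α, editDist s t ≤ d →
    ∃ v ∈ B, editDist s v ≤ r ∧ editDist t v ≤ r

namespace Levenshtein

variable {α : Type*} [DecidableEq α]

@[simp] theorem defaultCost_delete (a : α) : (defaultCost : Cost α α ℕ).delete a = 1 := rfl

@[simp] theorem defaultCost_insert (a : α) : (defaultCost : Cost α α ℕ).insert a = 1 := rfl

@[simp] theorem defaultCost_substitute (a b : α) :
    (defaultCost : Cost α α ℕ).substitute a b = if a = b then 0 else 1 := rfl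

local notation "lev" => levenshtein (defaultCost : Cost α α ℕ)

theorem levenshtein_cons_cons_le_substitute (a b : α) (x y : List α) :
    lev (a :: x) (b :: y) ≤ (if a = b then 0 else 1) + lev x y := by
  rw [levenshtein]
  exact (min_le_right _ _).trans (min_le_right _ _)

theorem levenshtein_self : ∀ x : List α, lev x x = 0
  | [] => by rw [levenshtein]
  | a :: x => by
    simpa [levenshtein_self x] using levenshtein_cons_cons_le_substitute a a x x

theorem eq_of_levenshtein_eq_zero : ∀ {x y : List α}, lev x y = 0 → x = y
  | [], [], _ => rfl
  | [], _ :: _, h | _ :: _, [], h => by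
    rw [levenshtein] at h
    simp at h
  | a :: x, b :: y, h => by
    rw [levenshtein] at h
    simp only [defaultCost_delete, defaultCost_insert, defaultCost_substitute,
      Nat.min_eq_zero_iff, Nat.add_eq_zero_iff, one_ne_zero, false_and, false_or,
      ite_eq_left_iff, imp_false, not_not] at h
    rw [h.1, eq_of_levenshtein_eq_zero h.2]

theorem levenshtein_cons_cons_le_one_iff {a b : α} {x y : List α}
    (hxy : x.length = y.length) :
    lev (a :: x) (b :: y) ≤ 1 ↔ (a = b ∧ lev x y ≤ 1) ∨ x = y := by
  refine ⟨fun h => ?_, ?_⟩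
  · rw [levenshtein] at h
    simp only [defaultCost_delete, defaultCost_insert, defaultCost_substitute, min_le_iff] at h
    rcases h with h | h | h
    · have := congrArg List.length (eq_of_levenshtein_eq_zero (by omega : lev x (b :: y) = 0))
      simp only [List.length_cons] at this
      omega
    · have := congrArg List.length (eq_of_levenshtein_eq_zero (by omega : lev (a :: x) y = 0))
      simp only [List.length_cons] at this
      omega
    · split_ifs at h with hab
      · exact .inl ⟨hab, by omega⟩
      · exact .inr (eq_of_levenshtein_eq_zero (by omega))
  · rintro (⟨rfl, h⟩ | rfl) <;> refine (levenshtein_cons_cons_le_substitute _ _ _ _).trans ?_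
    · simpa using h
    · simp only [levenshtein_self]
      split_ifs <;> simp

end Levenshtein

theorem hammingDist_fin_succ {n : ℕ} {β : Fin (n + 1) → Type*} [∀ i, DecidableEq (β i)]
    (s t : ∀ i, β i) :
    hammingDist s t = (if s 0 ≠ t 0 then 1 else 0) + hammingDist (Fin.tail s) (Fin.tail t) := by
  rw [hammingDist, hammingDist, Finset.card_filter, Finset.card_filter, Fin.sum_univ_succ]
  rfl

theorem editDist_le_one_iff_hammingDist_le_one {α : Type*} [DecidableEq α] :
    ∀ {n : ℕ} (s t : Fin n → α), editDist s t ≤ 1 ↔ hammingDist s t ≤ 1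
  | 0, s, t => by simp [editDist, levenshtein, hammingDist]
  | n + 1, s, t => by
    have ih := editDist_le_one_iff_hammingDist_le_one (Fin.tail s) (Fin.tail t)
    rw [editDist, List.ofFn_succ, List.ofFn_succ,
      Levenshtein.levenshtein_cons_cons_le_one_iff (by simp),
      ← Fin.tail_def, ← Fin.tail_def, ← editDist, ih, List.ofFn_inj,
      ← hammingDist_eq_zero (x := Fin.tail s) (y := Fin.tail t), hammingDist_fin_succ]
    by_cases h0 : s 0 = t 0 <;>
      simp only [h0, ne_eq, not_true_eq_false, not_false_eq_true, if_true, if_false, true_and,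
        false_and, false_or] <;> omega

section Hamming

variable {ι : Type*} {β : ι → Type*} [DecidableEq ι]

theorem injective_update_of_ne {s g : ∀ i, β i} (hg : ∀ i, g i ≠ s i) :
    Function.Injective fun i => Function.update s i (g i) := by
  intro i j hij
  by_contra hne
  have := congrFun hij i
  simp only [Function.update_self, Function.update_of_ne hne] at this
  exact hg i this

variable [Fintype ι] [∀ i, DecidableEq (β i)]

theorem hammingDist_update_le_one (s : ∀ i, β i) (i : ι) (b : β i) :
    hammingDist s (Function.update s i b) ≤ 1 := by
  have hmem : ∀ j ∈ Finset.univ.filter fun j => s j ≠ Function.update s i b j, j = i := by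
    intro j hj
    by_contra hji
    exact (Finset.mem_filter.1 hj).2 (Function.update_of_ne hji _ _).symm
  exact Finset.card_le_one.2 fun j hj k hk => (hmem j hj).trans (hmem k hk).symm

theorem eq_update_of_hammingDist_le_one {s v : ∀ i, β i} (h : hammingDist s v ≤ 1) {i : ι}
    (hi : v i ≠ s i) : v = Function.update s i (v i) := by
  funext k
  by_cases hki : k = i
  · subst hki
    simp
  · rw [Function.update_of_ne hki]
    by_contra hk
    exact hki (Finset.card_le_one.1 h k (Finset.mem_filter.2 ⟨Finset.mem_univ _, Ne.symm hk⟩)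
      i (Finset.mem_filter.2 ⟨Finset.mem_univ _, Ne.symm hi⟩))

end Hamming

theorem IsGuaranteed.exists_update_mem {α : Type*} [DecidableEq α] {n : ℕ}
    {B : Set (Fin n → α)} (hB : IsGuaranteed 1 1 B) {s : Fin n → α} (hs : s ∉ B) {i : Fin n}
    {b : α} (hb : b ≠ s i) : ∃ v ∈ B, v i ≠ s i ∧ v = Function.update s i (v i) := by
  obtain ⟨v, hvB, hsv, htv⟩ := hB s (Function.update s i b)
    ((editDist_le_one_iff_hammingDist_le_one _ _).2 (hammingDist_update_le_one s i b))
  rw [editDist_le_one_iff_hammingDist_le_one] at hsv htv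
  have hvi : v i ≠ s i := by
    intro hvi
    -- `v` differs from `t = update s i b` at `i`, hence only there, so `v` is `s` itself.
    have hvt := eq_update_of_hammingDist_le_one (i := i) htv (by simpa [hvi] using hb.symm)
    rw [Function.update_idem, hvi, Function.update_eq_self] at hvt
    exact hs (hvt ▸ hvB)
  exact ⟨v, hvB, hvi, eq_update_of_hammingDist_le_one hsv hvi⟩

theorem stmt15 {α : Type*} [Fintype α] [DecidableEq α] (hα : 1 < Fintype.card α)
    {n : ℕ} (B : Set (Fin n → α)) (hB : IsGuaranteed 1 1 B)
    (s : Fin n → α) (hs : s ∉ B) :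
    (∀ i : Fin n, ∃ v ∈ B, v i ≠ s i ∧ v = Function.update s i (v i)) ∧
    n ≤ Set.ncard {v ∈ B | editDist s v ≤ 1} := by
  have hsubst : ∀ i : Fin n, ∃ v ∈ B, v i ≠ s i ∧ v = Function.update s i (v i) :=
    fun i =>
      hB.exists_update_mem hs (Fintype.exists_ne_of_one_lt_card hα (s i)).choose_spec
  refine ⟨hsubst, ?_⟩
  choose v hvB hvs hv using hsubst
  have hinj : Function.Injective v := by
    simpa only [← hv] using injective_update_of_ne (s := s) hvs
  have hrange : Set.range v ⊆ {v ∈ B | editDist s v ≤ 1} := by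
    rintro _ ⟨i, rfl⟩
    refine ⟨hvB i, (editDist_le_one_iff_hammingDist_le_one _ _).2 ?_⟩
    rw [hv i]
    exact hammingDist_update_le_one s i _
  calc n = (Set.range v).ncard := by simp [Set.ncard_range_of_injective hinj]
    _ ≤ _ := Set.ncard_le_ncard hrange
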